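/- If g is an even continuous integrable probability density, then the boundary value of G at the origin is G(0⁺) := lim_{λ→0⁺} ∫ g(η)/(λ - iη) dη = π g(0), a real number; consequently, if g(0) > 0, then z = 0 solves the characteristic equation G(z) = 2/(Kμ) exactly when K μ = 2/(π g(0)). -/

import Mathlib

/-!
Since `g` is even, symmetrizing `η ↦ -η` replaces `1 / (λ - iη)` by its real part, the Poisson
kernel `λ / (λ² + η²)`: the principal-value part of `G(λ)` vanishes identically. The Poisson kernel
is `λ⁻¹ φ(η / λ)` for the Cauchy density `φ x = π⁻¹ (1 + x²)⁻¹`, an approximate identity, so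
`G(λ) → π g(0)` as `λ → 0⁺`. The second claim is `2 / (2 / b) = b`, valid even for `b = 0`.
-/

open MeasureTheory Complex Set Filter

section PoissonKernel

open Real Bornology

theorem tendsto_norm_mul_inv_one_add_sq_cobounded :
    Tendsto (fun x : ℝ => ‖x‖ * (1 + x ^ 2)⁻¹) (cobounded ℝ) (nhds 0) := by
  have hbound (x : ℝ) : ‖x‖ * (1 + x ^ 2)⁻¹ ≤ ‖x⁻¹‖ := by
    rcases eq_or_ne x 0 with rfl | hx
    · simp
    rw [norm_inv, ← div_eq_mul_inv, div_le_iff₀ (by positivity), Real.norm_eq_abs,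
      inv_mul_eq_div, le_div_iff₀ (abs_pos.2 hx), ← sq, sq_abs]
    linarith
  exact squeeze_zero (fun x => by positivity) hbound
    (by simpa using (tendsto_inv₀_cobounded (α := ℝ)).norm)

theorem tendsto_integral_poisson_kernel_smul {E : Type*} [NormedAddCommGroup E]
    [NormedSpace ℝ E] [CompleteSpace E] {g : ℝ → E} {x₀ : ℝ} (hg : Integrable g)
    (hg₀ : ContinuousAt g x₀) :
    Tendsto (fun lam : ℝ => ∫ η, (lam / (lam ^ 2 + (x₀ - η) ^ 2)) • g η)
      (nhdsWithin 0 (Ioi 0)) (nhds (π • g x₀)) := by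
  set φ : ℝ → ℝ := fun x => π⁻¹ * (1 + x ^ 2)⁻¹
  have hφ_nonneg (x : ℝ) : 0 ≤ φ x := by positivity
  have hφ_integral : ∫ x, φ x = 1 := by
    rw [integral_const_mul, integral_univ_inv_one_add_sq, inv_mul_cancel₀ pi_ne_zero]
  have hφ_decay : Tendsto (fun x : ℝ => ‖x‖ ^ Module.finrank ℝ ℝ * φ x) (cobounded ℝ) (nhds 0) := by
    simpa [φ, mul_left_comm] using tendsto_norm_mul_inv_one_add_sq_cobounded.const_mul π⁻¹
  have hlim := ((tendsto_integral_comp_smul_smul_of_integrable' hφ_nonneg hφ_integral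
    hφ_decay hg hg₀).comp tendsto_inv_nhdsGT_zero).const_smul π
  refine hlim.congr' ?_
  filter_upwards [self_mem_nhdsWithin] with lam (hlam : 0 < lam)
  rw [Function.comp_apply, ← integral_smul]
  congr 1 with η
  rw [smul_smul]
  congr 1
  simp only [φ, Module.finrank_self, pow_one, smul_eq_mul]
  field_simp

end PoissonKernel

theorem integral_eq_integral_half_add_comp_neg {E : Type*} [NormedAddCommGroup E]
    [NormedSpace ℝ E] {f : ℝ → E} (hf : Integrable f) :
    ∫ x, f x = ∫ x, (2 : ℝ)⁻¹ • (f x + f (-x)) := by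
  rw [integral_smul, integral_add hf hf.comp_neg, integral_neg_eq_self, ← two_smul ℝ,
    smul_smul, inv_mul_cancel₀ two_ne_zero, one_smul]

theorem inv_sub_I_mul_add_inv_add_I_mul {lam : ℝ} (hlam : lam ≠ 0) (η : ℝ) :
    ((lam : ℂ) - I * η)⁻¹ + ((lam : ℂ) + I * η)⁻¹ = ((2 * (lam / (lam ^ 2 + η ^ 2)) : ℝ) : ℂ) := by
  have hsub : (lam : ℂ) - I * η ≠ 0 := fun h => hlam (by simpa using congrArg re h)
  have hadd : (lam : ℂ) + I * η ≠ 0 := fun h => hlam (by simpa using congrArg re h)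
  have hsq : (lam : ℂ) ^ 2 + (η : ℂ) ^ 2 ≠ 0 := by
    exact_mod_cast (by positivity : lam ^ 2 + η ^ 2 ≠ 0)
  push_cast
  field_simp
  linear_combination 2 * lam * η ^ 2 * I_sq

theorem integrable_div_sub_I_mul {g : ℝ → ℂ} (hg : Integrable g) {lam : ℝ} (hlam : 0 < lam) :
    Integrable fun η : ℝ => g η / (lam - I * η) := by
  have hbound (η : ℝ) : ‖((lam : ℂ) - I * η)⁻¹‖ ≤ lam⁻¹ := by
    rw [norm_inv]
    gcongr
    simpa [abs_of_pos hlam] using abs_re_le_norm ((lam : ℂ) - I * η)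
  simpa only [div_eq_inv_mul] using
    hg.bdd_mul (f := fun η : ℝ => ((lam : ℂ) - I * η)⁻¹) (by fun_prop) (.of_forall hbound)

theorem integral_div_sub_I_mul_eq_integral_poisson_kernel_smul {g : ℝ → ℂ} (hg : Integrable g)
    (hg_even : ∀ η, g (-η) = g η) {lam : ℝ} (hlam : 0 < lam) :
    ∫ η : ℝ, g η / (lam - I * η) = ∫ η : ℝ, (lam / (lam ^ 2 + η ^ 2)) • g η := by
  rw [integral_eq_integral_half_add_comp_neg (integrable_div_sub_I_mul hg hlam)]
  congr 1 with η
  rw [hg_even, ofReal_neg, mul_neg, sub_neg_eq_add, div_eq_inv_mul, div_eq_inv_mul, ← add_mul,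
    inv_sub_I_mul_add_inv_add_I_mul hlam.ne', real_smul, real_smul, ← mul_assoc, ← ofReal_mul,
    inv_mul_cancel_left₀ two_ne_zero]

theorem eq_div_comm₀ {G₀ : Type*} [CommGroupWithZero G₀] {a b c : G₀} (hc : c ≠ 0) :
    a = c / b ↔ b = c / a := by
  constructor <;> rintro rfl <;> exact (div_div_cancel₀ hc).symm

theorem G_boundary_value_at_origin_general
    (g : ℝ → ℝ) (hg_cont : Continuous g)
    (hg_int : Integrable g) (hg_even : ∀ η, g (-η) = g η) :
    Tendsto (fun lam : ℝ => ∫ η : ℝ, (g η : ℂ) / ((lam : ℂ) - Complex.I * η))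
      (nhdsWithin 0 (Ioi 0)) (nhds ((Real.pi * g 0 : ℝ) : ℂ)) ∧
    (∀ K μ : ℝ, μ ≠ 0 →
      (Real.pi * g 0 = 2 / (K * μ) ↔ K * μ = 2 / (Real.pi * g 0))) := by
  refine ⟨?_, fun K μ _ => eq_div_comm₀ two_ne_zero⟩
  · have hlim := tendsto_integral_poisson_kernel_smul (x₀ := 0) hg_int.ofReal
      (continuous_ofReal.comp hg_cont).continuousAt
    simp only [zero_sub, even_two.neg_pow, Function.comp_apply] at hlim
    rw [ofReal_mul, ← real_smul]
    refine hlim.congr' ?_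
    filter_upwards [self_mem_nhdsWithin] with lam (hlam : 0 < lam)
    exact (integral_div_sub_I_mul_eq_integral_poisson_kernel_smul hg_int.ofReal
      (fun η => congrArg ofReal (hg_even η)) hlam).symm

/-- For an even continuous integrable probability density `g`, the boundary
value of `G` at the origin is `G(0⁺) = π g(0)`, a real number; consequently,
when `g(0) > 0`, `z = 0` solves `G(z) = 2/(Kμ)` exactly when `Kμ = 2/(π g(0))`. -/
theorem G_boundary_value_at_origin
    (g : ℝ → ℝ) (hg_cont : Continuous g) (hg_nonneg : ∀ ω, 0 ≤ g ω)
    (hg_int : Integrable g) (hg_prob : ∫ ω, g ω = 1)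
    (hg_even : ∀ η, g (-η) = g η) (hg0 : 0 < g 0) :
    Tendsto (fun lam : ℝ => ∫ η : ℝ, (g η : ℂ) / ((lam : ℂ) - Complex.I * η))
      (nhdsWithin 0 (Ioi 0)) (nhds ((Real.pi * g 0 : ℝ) : ℂ)) ∧
    (∀ K μ : ℝ, μ ≠ 0 →
      (Real.pi * g 0 = 2 / (K * μ) ↔ K * μ = 2 / (Real.pi * g 0))) :=
  G_boundary_value_at_origin_general g hg_cont hg_int hg_even
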